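/- Let μ be a probability measure on [0,∞) and t > 0 with μ[t,∞) > 0. Then ∫_{[0,t)} 1/μ[x,∞) dμ(x) ≤ −log μ[t,∞). -/

import Mathlib

open MeasureTheory Set
open scoped ENNReal

/-!
Write `G x = μ[x,∞)` and `a = G t`. Every sublevel set `{G < s}` has measure at most `s`: by
inner regularity it suffices to look at compact `K ⊆ {G < s}`, and such a `K` lies in
`[min K, ∞)`, of measure `G (min K) < s`. For `s > a` the set contains `[t,∞)`, so its part
left of `t` has measure at most `s - a`; it also has measure at most `1 - a`. The layer-cake
formula then bounds the integral of `1/G` over `[0,t)` by `∫₀^∞ (min 1 u⁻¹ - a)⁺ du = -log a`.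
-/

section TailMeasure

variable {α : Type*} [LinearOrder α] [TopologicalSpace α] [MeasurableSpace α]

theorem measure_le_of_forall_measure_Ici_le [ClosedIicTopology α] (μ : Measure α)
    [μ.InnerRegular] {T : Set α} (hT : MeasurableSet T) {s : ℝ≥0∞}
    (h : ∀ x ∈ T, μ (Ici x) ≤ s) : μ T ≤ s := by
  rw [hT.measure_eq_iSup_isCompact]
  refine iSup₂_le fun K hKT => iSup_le fun hK => ?_
  rcases K.eq_empty_or_nonempty with rfl | hK_ne
  · simp
  obtain ⟨m, hmK, hm⟩ := hK.exists_isLeast hK_ne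
  exact (measure_mono fun x hx => hm hx).trans (h m (hKT hmK))

variable [OrderClosedTopology α] [BorelSpace α] (μ : Measure α)

theorem measurable_measure_Ici : Measurable fun x => μ (Ici x) :=
  Antitone.measurable fun _ _ hxy => measure_mono (Ici_subset_Ici.mpr hxy)

theorem measure_setOf_measure_Ici_lt_le [μ.InnerRegular] (s : ℝ≥0∞) :
    μ {x | μ (Ici x) < s} ≤ s :=
  measure_le_of_forall_measure_Ici_le μ (measurable_measure_Ici μ measurableSet_Iio)
    fun _ hx => le_of_lt hx

theorem measure_setOf_measure_Ici_lt_inter_Iio_le [μ.InnerRegular] (s : ℝ≥0∞) (t : α) :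
    μ ({x | μ (Ici x) < s} ∩ Iio t) ≤ s - μ (Ici t) := by
  by_cases hts : μ (Ici t) < s
  · refine ENNReal.le_sub_of_add_le_right hts.ne_top ?_
    have hdisj : Disjoint ({x | μ (Ici x) < s} ∩ Iio t) (Ici t) :=
      disjoint_left.mpr fun _ hx hxt => not_le.mpr hx.2 hxt
    rw [← measure_union hdisj measurableSet_Ici]
    refine (measure_mono (union_subset inter_subset_left fun x hx => ?_)).trans
      (measure_setOf_measure_Ici_lt_le μ s)
    exact (measure_mono (Ici_subset_Ici.mpr hx)).trans_lt hts
  · suffices {x | μ (Ici x) < s} ∩ Iio t = ∅ by simp [this]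
    refine eq_empty_of_forall_notMem fun x ⟨hxs, hxt⟩ => hts ?_
    exact (measure_mono (Ici_subset_Ici.mpr hxt.le)).trans_lt hxs

theorem measure_setOf_lt_inv_measure_Ici_inter_Iio_le [IsProbabilityMeasure μ] [μ.InnerRegular]
    (t : α) {u : ℝ} (hu : 0 < u) :
    μ ({x | u < (μ (Ici x)).toReal⁻¹} ∩ Iio t)
      ≤ ENNReal.ofReal (min 1 u⁻¹ - (μ (Ici t)).toReal) := by
  have hsub : {x | u < (μ (Ici x)).toReal⁻¹} ⊆ {x | μ (Ici x) < ENNReal.ofReal u⁻¹} := by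
    intro x hx
    have hpos : 0 < (μ (Ici x)).toReal := inv_pos.mp (hu.trans hx)
    exact (ENNReal.lt_ofReal_iff_toReal_lt (measure_ne_top μ _)).mpr
      ((lt_inv_comm₀ hu hpos).mp hx)
  have h_inv :
      μ ({x | u < (μ (Ici x)).toReal⁻¹} ∩ Iio t) ≤ ENNReal.ofReal u⁻¹ - μ (Ici t) :=
    (measure_mono (inter_subset_inter_left _ hsub)).trans
      (measure_setOf_measure_Ici_lt_inter_Iio_le μ _ t)
  have h_one : μ ({x | u < (μ (Ici x)).toReal⁻¹} ∩ Iio t) ≤ 1 - μ (Ici t) := by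
    rw [← prob_compl_eq_one_sub measurableSet_Ici, compl_Ici]
    exact measure_mono inter_subset_right
  rw [ENNReal.ofReal_sub _ ENNReal.toReal_nonneg, ENNReal.ofReal_toReal (measure_ne_top μ _),
    ENNReal.ofReal_min, ENNReal.ofReal_one,
    Monotone.map_min fun _ _ h => tsub_le_tsub_right h (μ (Ici t))]
  exact le_min h_one h_inv

end TailMeasure

theorem integral_inv_sub_const_one_inv {a : ℝ} (ha : 0 < a) :
    ∫ u in (1 : ℝ)..a⁻¹, (u⁻¹ - a) = -Real.log a - (1 - a) := by
  have h0 : (0 : ℝ) ∉ uIcc 1 a⁻¹ := fun h => by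
    rcases mem_uIcc.mp h with h | h <;> linarith [h.1, inv_pos.mpr ha]
  have h_inv : IntervalIntegrable (fun u : ℝ => u⁻¹) volume 1 a⁻¹ :=
    intervalIntegral.intervalIntegrable_inv (fun _ hx => ne_of_mem_of_not_mem hx h0)
      continuousOn_id
  rw [intervalIntegral.integral_sub h_inv intervalIntegrable_const, integral_inv h0,
    intervalIntegral.integral_const, smul_eq_mul, div_one, Real.log_inv]
  field_simp

theorem lintegral_Ioi_ofReal_min_one_inv_sub {a : ℝ} (ha : 0 < a) (ha1 : a ≤ 1) :
    ∫⁻ u in Ioi 0, ENNReal.ofReal (min 1 u⁻¹ - a) = ENNReal.ofReal (-Real.log a) := by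
  have h1a : 1 ≤ a⁻¹ := (one_le_inv₀ ha).mpr ha1
  have hsplit : Ioi (0 : ℝ) = Ioc 0 1 ∪ (Ioc 1 a⁻¹ ∪ Ioi a⁻¹) := by
    rw [Ioc_union_Ioi_eq_Ioi h1a, Ioc_union_Ioi_eq_Ioi zero_le_one]
  have hlow : ∫⁻ u in Ioc 0 1, ENNReal.ofReal (min 1 u⁻¹ - a) = ENNReal.ofReal (1 - a) := by
    rw [setLIntegral_congr_fun measurableSet_Ioc fun u hu => by
      rw [min_eq_left ((one_le_inv₀ hu.1).mpr hu.2)]]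
    simp
  have hmid : ∫⁻ u in Ioc 1 a⁻¹, ENNReal.ofReal (min 1 u⁻¹ - a) =
      ENNReal.ofReal (-Real.log a - (1 - a)) := by
    rw [setLIntegral_congr_fun measurableSet_Ioc fun u hu => by
      rw [min_eq_right (inv_le_one_of_one_le₀ hu.1.le)]]
    rw [← integral_inv_sub_const_one_inv ha, intervalIntegral.integral_of_le h1a,
      ofReal_integral_eq_lintegral_ofReal]
    · refine ((ContinuousOn.integrableOn_Icc ?_).mono_set Ioc_subset_Icc_self)
      exact (continuousOn_inv₀.mono fun u hu => (zero_lt_one.trans_le hu.1).ne').sub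
        continuousOn_const
    · filter_upwards [ae_restrict_mem measurableSet_Ioc] with u hu
      exact sub_nonneg.mpr ((le_inv_comm₀ ha (zero_lt_one.trans hu.1)).mpr hu.2)
  have hhigh : ∫⁻ u in Ioi a⁻¹, ENNReal.ofReal (min 1 u⁻¹ - a) = 0 := by
    refine setLIntegral_eq_zero measurableSet_Ioi fun u hu => ENNReal.ofReal_eq_zero.mpr ?_
    have : u⁻¹ < a := inv_lt_of_inv_lt₀ ha hu
    linarith [min_le_right 1 u⁻¹]
  have hdisj : Disjoint (Ioc (0 : ℝ) 1) (Ioc 1 a⁻¹ ∪ Ioi a⁻¹) := by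
    rw [Ioc_union_Ioi_eq_Ioi h1a]; exact Ioc_disjoint_Ioi le_rfl
  rw [hsplit, lintegral_union (measurableSet_Ioc.union measurableSet_Ioi) hdisj,
    lintegral_union measurableSet_Ioi (Ioc_disjoint_Ioi le_rfl), hlow, hmid, hhigh, add_zero,
    ← ENNReal.ofReal_add (by linarith)]
  · ring_nf
  · linarith [Real.add_one_le_exp (Real.log a), Real.exp_log ha]

theorem stmt7 (μ : Measure ℝ) [IsProbabilityMeasure μ]
    (t : ℝ) (hpos : 0 < μ (Set.Ici t)) :
    ∫ x in Set.Ico 0 t, ((μ (Set.Ici x)).toReal)⁻¹ ∂μ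
      ≤ - Real.log (μ (Set.Ici t)).toReal := by
  have ha : 0 < (μ (Ici t)).toReal := ENNReal.toReal_pos hpos.ne' (measure_ne_top μ _)
  have ha1 : (μ (Ici t)).toReal ≤ 1 := measureReal_le_one
  have hf_meas : Measurable fun x => (μ (Ici x)).toReal⁻¹ :=
    (measurable_measure_Ici μ).ennreal_toReal.inv
  have hf_nonneg : 0 ≤ fun x => (μ (Ici x)).toReal⁻¹ := fun x => by positivity
  rw [integral_eq_lintegral_of_nonneg_ae (.of_forall hf_nonneg) hf_meas.aestronglyMeasurable]
  refine ENNReal.toReal_le_of_le_ofReal (neg_nonneg.mpr (Real.log_nonpos ha.le ha1)) ?_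
  rw [lintegral_eq_lintegral_meas_lt _ (.of_forall hf_nonneg) hf_meas.aemeasurable,
    ← lintegral_Ioi_ofReal_min_one_inv_sub ha ha1]
  refine setLIntegral_mono (by fun_prop) fun u hu => ?_
  rw [Measure.restrict_apply (measurableSet_lt measurable_const hf_meas)]
  exact (measure_mono (inter_subset_inter_right _ Ico_subset_Iio_self)).trans
    (measure_setOf_lt_inv_measure_Ici_inter_Iio_le μ t hu)
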